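/- arXiv:1412.4487 — 8 statements merged into one kernel-verified Lean document; each statement's English description precedes it below -/
import Mathlib

section
/- Let η be a natural transformation from the identity functor of the category of finite groups to itself; that is, for every finite group G a group homomorphism η_G : G → G is given such that f ∘ η_G = η_H ∘ f for every group homomorphism f : G → H between finite groups. Then either η_G is the identity homomorphism for every finite group G, or η_G is the trivial homomorphism (sending every element to 1) for every finite group G. -/
/-!
Naturality along the inclusion `⟨x⟩ ≤ G` and along homomorphisms out of the cyclic group
`⟨x⟩` shows that `η_G x ∈ ⟨x⟩`, and that `η_G x = x ^ k` forces `η_H y = y ^ k` for every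
`y` whose order divides that of `x`. So `η` acts on all involutions as `t ↦ t ^ k` with
`k ∈ {0, 1}`. In the dihedral group of order `2n` the rotation `r 1`, of order `n`, is a
product of two involutions, and `(a * b) ^ k = a ^ k * b ^ k` for `k ∈ {0, 1}`; hence
`η (r 1) = (r 1) ^ k`, which propagates to every element of order `n`.
-/

universe u

open Subgroup DihedralGroup

theorem Subgroup.mem_zpowers_mk_self {G : Type*} [Group G] (x : G) (z : zpowers x) :
    z ∈ zpowers ⟨x, mem_zpowers x⟩ := by
  obtain ⟨_, n, rfl⟩ := z
  exact ⟨n, Subtype.ext (by simp)⟩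

theorem ULift.orderOf_up {M : Type*} [Monoid M] (x : M) : orderOf (ULift.up.{u} x) = orderOf x :=
  MulEquiv.ulift.symm.orderOf_eq x

namespace FiniteGroupCenter

variable (η : ∀ (G : Type u) [Group G] [Finite G], G →* G)
  (hη : ∀ (G : Type u) [Group G] [Finite G] (H : Type u) [Group H] [Finite H]
    (f : G →* H), f.comp (η G) = (η H).comp f)
include hη

theorem naturality_apply
    {G H : Type u} [Group G] [Finite G] [Group H] [Finite H] (f : G →* H) (x : G) :
    η H (f x) = f (η G x) :=
  (DFunLike.congr_fun (hη G H f) x).symm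

theorem apply_mem_zpowers
    {G : Type u} [Group G] [Finite G] (x : G) : η G x ∈ zpowers x := by
  rw [← Subgroup.coe_mk (zpowers x) x (mem_zpowers x), ← Subgroup.coe_subtype,
    naturality_apply η hη]
  exact (η (zpowers x) ⟨x, mem_zpowers x⟩).2

theorem exists_apply_eq_pow_of_orderOf_eq_two
    {T : Type u} [Group T] [Finite T] {t : T} (ht : orderOf t = 2) :
    ∃ k, (k = 0 ∨ k = 1) ∧ η T t = t ^ k := by
  classical
  obtain ⟨k, hk, hkt⟩ := Finset.mem_image.1 <|
    mem_zpowers_iff_mem_range_orderOf.1 (apply_mem_zpowers η hη t)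
  rw [ht, Finset.mem_range] at hk
  exact ⟨k, by omega, hkt.symm⟩

theorem apply_eq_pow_of_orderOf_dvd
    {G H : Type u} [Group G] [Finite G] [Group H] [Finite H] {x : G} {y : H} {k : ℕ}
    (hxy : orderOf y ∣ orderOf x) (hx : η G x = x ^ k) : η H y = y ^ k := by
  set x' : zpowers x := ⟨x, mem_zpowers x⟩
  have hx' : η _ x' = x' ^ k := Subtype.ext <| by
    rw [← Subgroup.coe_subtype, ← naturality_apply η hη, map_pow]
    exact hx
  let φ := monoidHomOfForallMemZpowers (mem_zpowers_mk_self x) (g' := y)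
    (by rwa [Subgroup.orderOf_mk])
  have hφ : φ x' = y := monoidHomOfForallMemZpowers_apply_gen _ _
  rw [← hφ, naturality_apply η hη, hx', map_pow]

theorem apply_eq_pow
    {T : Type u} [Group T] [Finite T] {t : T} (ht : orderOf t = 2) {k : ℕ} (hk : k = 0 ∨ k = 1)
    (htk : η T t = t ^ k) {G : Type u} [Group G] [Finite G] (g : G) : η G g = g ^ k := by
  have : NeZero (orderOf g) := ⟨(orderOf_pos g).ne'⟩
  let D := ULift.{u} (DihedralGroup (orderOf g))
  have hsr (i) : η D ⟨sr i⟩ = ⟨sr i⟩ ^ k :=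
    apply_eq_pow_of_orderOf_dvd η hη (by rw [ht, ULift.orderOf_up, orderOf_sr]) htk
  have hr : η D ⟨r 1⟩ = ⟨r 1⟩ ^ k := by
    have hr_eq : (⟨r 1⟩ : D) = ⟨sr 0⟩ * ⟨sr 1⟩ :=
      congrArg ULift.up (by rw [sr_mul_sr, sub_zero])
    rcases hk with rfl | rfl <;> simp only [hr_eq, map_mul, hsr, pow_zero, pow_one, mul_one]
  exact apply_eq_pow_of_orderOf_dvd η hη (by rw [ULift.orderOf_up, orderOf_r_one]) hr

end FiniteGroupCenter

/-- A natural transformation from the identity functor of the category of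
finite groups to itself is either the identity everywhere or trivial everywhere. -/
theorem center_of_category_of_finite_groups
    (η : ∀ (G : Type u) [Group G] [Finite G], G →* G)
    (hη : ∀ (G : Type u) [Group G] [Finite G] (H : Type u) [Group H] [Finite H]
      (f : G →* H), f.comp (η G) = (η H).comp f) :
    (∀ (G : Type u) [Group G] [Finite G], η G = MonoidHom.id G) ∨
    (∀ (G : Type u) [Group G] [Finite G] (g : G), η G g = 1) := by
  have ht : orderOf (⟨sr 0⟩ : ULift.{u} (DihedralGroup 1)) = 2 := by
    rw [ULift.orderOf_up, orderOf_sr]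
  obtain ⟨k, hk, htk⟩ := FiniteGroupCenter.exists_apply_eq_pow_of_orderOf_eq_two η hη ht
  have hpow : ∀ (G : Type u) [Group G] [Finite G] (g : G), η G g = g ^ k :=
    fun _ _ _ => FiniteGroupCenter.apply_eq_pow η hη ht hk htk
  rcases hk with rfl | rfl
  · exact Or.inr fun G _ _ g => by rw [hpow G g, pow_zero]
  · exact Or.inl fun G _ _ => MonoidHom.ext fun g => by rw [hpow G g, pow_one, MonoidHom.id_apply]
end

section
/- Let m and n be natural numbers with m ≥ 5 and 2 ≤ n ≤ m. Then the subgroup of the symmetric group Equiv.Perm (Fin m) generated by the set of elements of order n is equal either to the alternating group on Fin m or to the whole symmetric group. -/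
/-!
The elements of order `n` form a conjugation-invariant set, so they generate a normal subgroup
`H`. For `n = 2` it contains every transposition. For `n ≥ 3` pick `σ` of order `n` (an
`n`-cycle) and a point `a` with `σ² a ≠ a`; the commutator of `σ` with the transposition
`(a σa)` is a 3-cycle lying in `H`. All 3-cycles are conjugate and generate the alternating
group, so `H` contains it, and the alternating group has index 2.
-/

open Equiv Equiv.Perm Subgroup
open scoped commutatorElement

theorem Subgroup.normal_closure_setOf_orderOf_eq {G : Type*} [Group G] (n : ℕ) :
    (closure {g : G | orderOf g = n}).Normal := by
  refine normalizer_eq_top_iff.mp (eq_top_iff.mpr fun x _ ↦ normalizer_le_normalizer_closure _ ?_)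
  intro g
  simp only [Set.mem_ofPred_eq, (SemiconjBy.conj_mk x g).orderOf_eq]

namespace Equiv.Perm

variable {α : Type*} [Fintype α] [DecidableEq α]

theorem exists_orderOf_eq {n : ℕ} (hn : 2 ≤ n) (hnα : n ≤ Fintype.card α) :
    ∃ σ : Perm α, orderOf σ = n := by
  obtain ⟨σ, hσ⟩ : ∃ σ : Perm α, σ.cycleType = {n} :=
    (exists_with_cycleType_iff α).mpr ⟨by simpa using hnα, by simpa using hn⟩
  exact ⟨σ, by rw [← lcm_cycleType, hσ, Multiset.lcm_singleton, normalize_eq]⟩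

theorem isThreeCycle_commutatorElement_swap {σ : Perm α} {a : α} (h₁ : σ a ≠ a)
    (h₂ : σ (σ a) ≠ a) : IsThreeCycle ⁅σ, swap a (σ a)⁆ := by
  rw [commutatorElement_def, ← swap_apply_apply, swap_inv, swap_comm a]
  exact isThreeCycle_swap_mul_swap_same (fun h ↦ h₁ (σ.injective h).symm) h₁ h₂

theorem exists_isThreeCycle_mem_of_sq_ne_one {H : Subgroup (Perm α)} [hH : H.Normal]
    {σ : Perm α} (hσH : σ ∈ H) (hσ : σ ^ 2 ≠ 1) : ∃ τ ∈ H, IsThreeCycle τ := by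
  obtain ⟨a, ha⟩ : ∃ a, σ (σ a) ≠ a := by
    by_contra! h
    exact hσ (Equiv.ext fun a ↦ by simpa [sq] using h a)
  have h₁ : σ a ≠ a := fun h ↦ ha (by rw [h, h])
  refine ⟨_, ?_, isThreeCycle_commutatorElement_swap h₁ ha⟩
  rw [commutatorElement_def, mul_assoc σ, mul_assoc σ]
  exact mul_mem hσH (hH.conj_mem _ (inv_mem hσH) _)

theorem alternatingGroup_le_of_isThreeCycle_mem {H : Subgroup (Perm α)} [hH : H.Normal]
    {τ : Perm α} (hτ : IsThreeCycle τ) (hτH : τ ∈ H) : alternatingGroup α ≤ H := by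
  rw [← closure_three_cycles_eq_alternating, closure_le]
  intro g hg
  obtain ⟨c, rfl⟩ := isConj_iff.mp (isConj_iff_cycleType_eq.mpr (hτ.trans hg.symm))
  exact hH.conj_mem τ hτH c

theorem eq_alternatingGroup_or_eq_top_of_alternatingGroup_le {H : Subgroup (Perm α)}
    (h : alternatingGroup α ≤ H) : H = alternatingGroup α ∨ H = ⊤ := by
  cases subsingleton_or_nontrivial α
  · exact .inr (eq_top_iff.mpr (index_eq_one.mp (alternatingGroup.index_eq_one (α := α)) ▸ h))
  have hdvd : H.index ∣ 2 := alternatingGroup.index_eq_two (α := α) ▸ index_dvd_of_le h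
  rcases (Nat.dvd_prime Nat.prime_two).mp hdvd with h1 | h2
  · exact .inr (index_eq_one.mp h1)
  · exact .inl (eq_alternatingGroup_of_index_eq_two h2)

end Equiv.Perm

theorem closure_of_elements_of_order_n_general
    (m n : ℕ) (hn : 2 ≤ n) (hnm : n ≤ m) :
    Subgroup.closure {g : Equiv.Perm (Fin m) | orderOf g = n} = alternatingGroup (Fin m) ∨
    Subgroup.closure {g : Equiv.Perm (Fin m) | orderOf g = n} = ⊤ := by
  have := normal_closure_setOf_orderOf_eq (G := Perm (Fin m)) n
  rcases hn.eq_or_lt with rfl | hn3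
  · refine .inr (eq_top_iff.mpr ?_)
    rw [← closure_isSwap]
    exact closure_mono fun σ hσ ↦ hσ.orderOf
  obtain ⟨σ, hσ⟩ := exists_orderOf_eq (α := Fin m) hn (by simpa using hnm)
  have hσH : σ ∈ closure {g : Perm (Fin m) | orderOf g = n} := subset_closure hσ
  obtain ⟨τ, hτH, hτ⟩ :=
    exists_isThreeCycle_mem_of_sq_ne_one hσH (pow_ne_one_of_lt_orderOf two_ne_zero (hσ ▸ hn3))
  exact eq_alternatingGroup_or_eq_top_of_alternatingGroup_le
    (alternatingGroup_le_of_isThreeCycle_mem hτ hτH)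

/-- For `m ≥ 5` and `2 ≤ n ≤ m`, the subgroup of the symmetric group on
`m` letters generated by the elements of order `n` is the alternating group or the
full symmetric group. -/
theorem closure_of_elements_of_order_n
    (m n : ℕ) (hm : 5 ≤ m) (hn : 2 ≤ n) (hnm : n ≤ m) :
    Subgroup.closure {g : Equiv.Perm (Fin m) | orderOf g = n} = alternatingGroup (Fin m) ∨
    Subgroup.closure {g : Equiv.Perm (Fin m) | orderOf g = n} = ⊤ :=
  closure_of_elements_of_order_n_general m n hn hnm
end

section
/- Fix a universe u. Suppose that for every pair of finite groups G, H in u and every group homomorphism α : G → H an element Q(α) ∈ H is given such that: (i) Q(α) lies in the center of the centralizer in H of the range of α (that is, Q(α) commutes with α(g) for all g ∈ G and with every element of H that commutes with all α(g)); and (ii) for all finite groups G, H, K and homomorphisms β : G → H, γ : H → K one has Q(γ ∘ β) = Q(γ) · γ(Q(β)). Then there exists a family assigning to each finite group F an element P(F) of the center of F such that Q(α) = P(H) · (α(P(G)))⁻¹ for every homomorphism α : G → H between finite groups. -/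
/-!
The coboundary is given by the values of `Q` on the trivial homomorphisms out of the trivial
group: `P F = Q (1 : PUnit → F)`. The trivial homomorphism has trivial range, whose centralizer
is all of `F`, so `P F` is central. Composing `1 : PUnit → G` with `α : G → H` gives the trivial
homomorphism `PUnit → H` again, so the cocycle identity reads `P H = Q α * α (P G)`.
-/

universe u

theorem MonoidHom.centralizer_range_one {G H : Type*} [Group G] [Group H] :
    Subgroup.centralizer (Set.range (1 : G →* H)) = ⊤ := by
  rw [Subgroup.centralizer_eq_top_iff_subset]
  rintro _ ⟨_, rfl⟩
  exact one_mem _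

/-- Vanishing of `E₂^{1,1}` for the 2-category of finite groups: every
1-cocycle `Q` assigning to each homomorphism `α : G → H` of finite groups an element of
the center of the centralizer of the range of `α`, satisfying
`Q(γ ∘ β) = Q(γ) · γ(Q(β))`, is a coboundary. -/
theorem cocycle_on_finite_groups_is_coboundary
    (Q : ∀ (G : Type u) [Group G] [Finite G] (H : Type u) [Group H] [Finite H],
      (G →* H) → H)
    (hQ1 : ∀ (G : Type u) [Group G] [Finite G] (H : Type u) [Group H] [Finite H]
      (α : G →* H),
      Q G H α ∈ Subgroup.centralizer (Set.range α) ∧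
        ∀ h ∈ Subgroup.centralizer (Set.range α), Q G H α * h = h * Q G H α)
    (hQ2 : ∀ (G : Type u) [Group G] [Finite G] (H : Type u) [Group H] [Finite H]
      (K : Type u) [Group K] [Finite K] (β : G →* H) (γ : H →* K),
      Q G K (γ.comp β) = Q H K γ * γ (Q G H β)) :
    ∃ P : ∀ (F : Type u) [Group F] [Finite F], F,
      (∀ (F : Type u) [Group F] [Finite F], P F ∈ Subgroup.center F) ∧
      ∀ (G : Type u) [Group G] [Finite G] (H : Type u) [Group H] [Finite H]
        (α : G →* H), Q G H α = P H * (α (P G))⁻¹ := by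
  refine ⟨fun F _ _ => Q PUnit F 1, fun F _ _ => ?_, fun G _ _ H _ _ α => ?_⟩
  · refine Subgroup.mem_center_iff.mpr fun g => ((hQ1 PUnit F 1).2 g ?_).symm
    simp only [MonoidHom.centralizer_range_one, Subgroup.mem_top]
  · have hcocycle := hQ2 PUnit G H 1 α
    rw [MonoidHom.comp_one] at hcocycle
    show Q G H α = Q PUnit H 1 * (α (Q PUnit G 1))⁻¹
    rw [hcocycle, mul_inv_cancel_right]
end

section
/- Fix a universe u containing the ring of integers (e.g. via ULift). Suppose that for every pair of rings A, B in u a unit z(A,B) of the center of the ring B ⊗[ℤ] Aᵐᵒᵖ is given, and that for all rings A, B, C in u the following cocycle condition holds: the ℤ-linear map Φ : (C ⊗[ℤ] Bᵐᵒᵖ) ⊗[ℤ] (B ⊗[ℤ] Aᵐᵒᵖ) → C ⊗[ℤ] B ⊗[ℤ] Aᵐᵒᵖ induced by c ⊗ b' ⊗ b ⊗ a ↦ c ⊗ (unop(b')·b) ⊗ a sends z(B,C) ⊗ z(A,B) to the image of z(A,C) under the map C ⊗[ℤ] Aᵐᵒᵖ → C ⊗[ℤ] B ⊗[ℤ] Aᵐᵒᵖ,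 c ⊗ a ↦ c ⊗ 1 ⊗ a. Then there exists, for every ring A in u, a unit w(A) of the center of A such that z(A,B) = (w(B) ⊗ 1) · (1 ⊗ op(w(A))⁻¹) in B ⊗[ℤ] Aᵐᵒᵖ for all rings A, B in u. -/
open scoped TensorProduct

universe u

set_option synthInstance.maxHeartbeats 400000
set_option maxHeartbeats 1000000

/-- The `ℤ`-linear map `Bᵐᵒᵖ ⊗[ℤ] B →ₗ[ℤ] B` given by `b' ⊗ b ↦ unop b' * b`. -/
noncomputable def opMulMap (B : Type u) [Ring B] : Bᵐᵒᵖ ⊗[ℤ] B →ₗ[ℤ] B :=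
  (LinearMap.mul' ℤ B).comp
    (TensorProduct.map (MulOpposite.opLinearEquiv ℤ).symm.toLinearMap LinearMap.id)

/-- The `ℤ`-linear map `(C ⊗[ℤ] Bᵐᵒᵖ) ⊗[ℤ] (B ⊗[ℤ] Aᵐᵒᵖ) →ₗ[ℤ] C ⊗[ℤ] B ⊗[ℤ] Aᵐᵒᵖ`
induced by `c ⊗ b' ⊗ b ⊗ a ↦ c ⊗ (unop b' * b) ⊗ a`. -/
noncomputable def cocyclePairing (A B C : Type u) [Ring A] [Ring B] [Ring C] :
    (C ⊗[ℤ] Bᵐᵒᵖ) ⊗[ℤ] (B ⊗[ℤ] Aᵐᵒᵖ) →ₗ[ℤ] C ⊗[ℤ] (B ⊗[ℤ] Aᵐᵒᵖ) :=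
  (TensorProduct.map LinearMap.id
      ((TensorProduct.map (opMulMap B) LinearMap.id).comp
        (TensorProduct.assoc ℤ Bᵐᵒᵖ B Aᵐᵒᵖ).symm.toLinearMap)).comp
    (TensorProduct.assoc ℤ C Bᵐᵒᵖ (B ⊗[ℤ] Aᵐᵒᵖ)).toLinearMap

/-- The `ℤ`-linear map `C ⊗[ℤ] Aᵐᵒᵖ →ₗ[ℤ] C ⊗[ℤ] B ⊗[ℤ] Aᵐᵒᵖ`, `c ⊗ a ↦ c ⊗ 1 ⊗ a`. -/
noncomputable def unitInsertion (A B C : Type u) [Ring A] [Ring B] [Ring C] :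
    C ⊗[ℤ] Aᵐᵒᵖ →ₗ[ℤ] C ⊗[ℤ] (B ⊗[ℤ] Aᵐᵒᵖ) :=
  TensorProduct.map LinearMap.id (TensorProduct.mk ℤ B Aᵐᵒᵖ 1)

/-! Evaluate the cocycle at the initial ring `ℤ` (lifted to universe `u`) and collapse the
factors `B ⊗ ℤᵐᵒᵖ ≅ B` and `ℤ ⊗ Aᵐᵒᵖ ≅ Aᵐᵒᵖ`. The cocycle identity for `(A, ℤ, B)` gives
`z(A,B) = w(B) ⊗ v(A)` with `w(B) = z(ℤ,B)` and `v(A) = z(A,ℤ)`; the one for `(ℤ, A, ℤ)` gives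
`v(A) w(A) = c` for the integer `c = z(ℤ,ℤ)`. For `A = ℤ` this reads `c² = c`, so the unit `c`
is `1` and `v(A) = w(A)⁻¹`. -/

open TensorProduct MulOpposite

noncomputable def uliftLid (X : Type u) [Ring X] : ULift.{u} ℤ ⊗[ℤ] X ≃ₐ[ℤ] X :=
  (Algebra.TensorProduct.congr ULift.algEquiv AlgEquiv.refl).trans (Algebra.TensorProduct.lid ℤ X)

noncomputable def uliftOpRid (X : Type u) [Ring X] : X ⊗[ℤ] (ULift.{u} ℤ)ᵐᵒᵖ ≃ₐ[ℤ] X :=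
  (Algebra.TensorProduct.congr AlgEquiv.refl
      ((AlgEquiv.toOpposite ℤ (ULift.{u} ℤ)).symm.trans ULift.algEquiv)).trans
    (Algebra.TensorProduct.rid ℤ ℤ X)

@[simp] lemma uliftLid_tmul (X : Type u) [Ring X] (s : ULift.{u} ℤ) (x : X) :
    uliftLid X (s ⊗ₜ x) = s.down • x := by
  simp [uliftLid]

@[simp] lemma uliftOpRid_tmul (X : Type u) [Ring X] (x : X) (t : (ULift.{u} ℤ)ᵐᵒᵖ) :
    uliftOpRid X (x ⊗ₜ t) = (unop t).down • x := by
  simp [uliftOpRid]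

lemma down_unop_uliftLid (x : ULift.{u} ℤ ⊗[ℤ] (ULift.{u} ℤ)ᵐᵒᵖ) :
    (unop (uliftLid (ULift.{u} ℤ)ᵐᵒᵖ x)).down = (uliftOpRid (ULift.{u} ℤ) x).down := by
  induction x using TensorProduct.induction_on with
  | zero => simp
  | tmul s t => simp [mul_comm]
  | add x y hx hy => simp [hx, hy]

section
variable (A B : Type u) [Ring A] [Ring B]

lemma map_uliftLid_comp_cocyclePairing :
    map LinearMap.id (uliftLid Aᵐᵒᵖ).toLinearMap ∘ₗ cocyclePairing A (ULift.{u} ℤ) B =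
      map (uliftOpRid B).toLinearMap (uliftLid Aᵐᵒᵖ).toLinearMap := by
  refine TensorProduct.ext_fourfold' fun b t s a => ?_
  -- `cocyclePairing` and `unitInsertion` use the `ℤ`-module structures `AddCommGroup.toIntModule`,
  -- which `rw`/`simp` do not identify with the tensor product ones: unfold by `show` instead.
  show b ⊗ₜ uliftLid Aᵐᵒᵖ ((unop t * s) ⊗ₜ a) = uliftOpRid B (b ⊗ₜ t) ⊗ₜ uliftLid Aᵐᵒᵖ (s ⊗ₜ a)
  rw [uliftLid_tmul, uliftOpRid_tmul, uliftLid_tmul, ULift.mul_down, mul_smul, smul_tmul]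

lemma map_uliftLid_comp_unitInsertion :
    map LinearMap.id (uliftLid Aᵐᵒᵖ).toLinearMap ∘ₗ unitInsertion A (ULift.{u} ℤ) B =
      LinearMap.id := by
  refine TensorProduct.ext' fun b a => ?_
  show b ⊗ₜ uliftLid Aᵐᵒᵖ (1 ⊗ₜ a) = b ⊗ₜ a
  simp

lemma eq_tmul_of_cocyclePairing_eq {x : B ⊗[ℤ] (ULift.{u} ℤ)ᵐᵒᵖ} {y : ULift.{u} ℤ ⊗[ℤ] Aᵐᵒᵖ}
    {t : B ⊗[ℤ] Aᵐᵒᵖ} (h : cocyclePairing A (ULift.{u} ℤ) B (x ⊗ₜ y) = unitInsertion A _ B t) :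
    t = uliftOpRid B x ⊗ₜ uliftLid Aᵐᵒᵖ y :=
  (LinearMap.congr_fun (map_uliftLid_comp_unitInsertion A B) t).symm.trans <|
    (congrArg (map LinearMap.id (uliftLid Aᵐᵒᵖ).toLinearMap) h).symm.trans <|
      LinearMap.congr_fun (map_uliftLid_comp_cocyclePairing A B) (x ⊗ₜ y)

lemma uliftLid_map_uliftOpRid_comp_cocyclePairing :
    ((uliftLid A).toLinearMap ∘ₗ map LinearMap.id (uliftOpRid A).toLinearMap) ∘ₗ
        cocyclePairing (ULift.{u} ℤ) A (ULift.{u} ℤ) =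
      LinearMap.mul' ℤ A ∘ₗ
        map ((opLinearEquiv ℤ).symm.toLinearMap ∘ₗ (uliftLid Aᵐᵒᵖ).toLinearMap)
          (uliftOpRid A).toLinearMap := by
  refine TensorProduct.ext_fourfold' fun s a b t => ?_
  show uliftLid A (s ⊗ₜ uliftOpRid A ((unop a * b) ⊗ₜ t)) =
    unop (uliftLid Aᵐᵒᵖ (s ⊗ₜ a)) * uliftOpRid A (b ⊗ₜ t)
  simp only [uliftLid_tmul, uliftOpRid_tmul, unop_smul, smul_mul_smul_comm, mul_smul]

lemma uliftLid_map_uliftOpRid_comp_unitInsertion :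
    ((uliftLid A).toLinearMap ∘ₗ map LinearMap.id (uliftOpRid A).toLinearMap) ∘ₗ
        unitInsertion (ULift.{u} ℤ) A (ULift.{u} ℤ) =
      Algebra.linearMap ℤ A ∘ₗ ULift.algEquiv.toLinearMap ∘ₗ (uliftOpRid _).toLinearMap := by
  refine TensorProduct.ext' fun s t => ?_
  show uliftLid A (s ⊗ₜ uliftOpRid A ((1 : A) ⊗ₜ t)) = ((uliftOpRid _ (s ⊗ₜ t)).down : A)
  simpa using Int.cast_comm _ _

lemma unop_mul_eq_of_cocyclePairing_eq {y : ULift.{u} ℤ ⊗[ℤ] Aᵐᵒᵖ} {x : A ⊗[ℤ] (ULift.{u} ℤ)ᵐᵒᵖ}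
    {s : ULift.{u} ℤ ⊗[ℤ] (ULift.{u} ℤ)ᵐᵒᵖ}
    (h : cocyclePairing (ULift.{u} ℤ) A (ULift.{u} ℤ) (y ⊗ₜ x) = unitInsertion _ A _ s) :
    unop (uliftLid Aᵐᵒᵖ y) * uliftOpRid A x = ((uliftOpRid _ s).down : A) :=
  (LinearMap.congr_fun (uliftLid_map_uliftOpRid_comp_cocyclePairing A) (y ⊗ₜ x)).symm.trans <|
    (congrArg ((uliftLid A).toLinearMap ∘ₗ map LinearMap.id (uliftOpRid A).toLinearMap) h).trans <|
      LinearMap.congr_fun (uliftLid_map_uliftOpRid_comp_unitInsertion A) s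

end

lemma down_uliftOpRid_eq_one {s : ULift.{u} ℤ ⊗[ℤ] (ULift.{u} ℤ)ᵐᵒᵖ}
    (h : cocyclePairing (ULift.{u} ℤ) _ (ULift.{u} ℤ) (s ⊗ₜ s) = unitInsertion _ _ _ s)
    (hs : IsUnit s) :
    (uliftOpRid _ s).down = 1 := by
  have hidem : (uliftOpRid _ s).down * (uliftOpRid _ s).down = (uliftOpRid _ s).down := by
    simpa [down_unop_uliftLid] using congrArg ULift.down (unop_mul_eq_of_cocyclePairing_eq _ h)
  have hunit : IsUnit (uliftOpRid _ s).down := (hs.map (uliftOpRid _)).map ULift.ringEquiv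
  exact (mul_eq_right₀ hunit.ne_zero).mp hidem

lemma exists_coboundary_of_eq_tmul
    (z : ∀ (A : Type u) [Ring A] (B : Type u) [Ring B], (Subring.center (B ⊗[ℤ] Aᵐᵒᵖ))ˣ)
    (w v : ∀ (A : Type u) [Ring A], Subring.center A) (hvw : ∀ (A : Type u) [Ring A], v A * w A = 1)
    (hz : ∀ (A : Type u) [Ring A] (B : Type u) [Ring B],
      ((z A B : Subring.center (B ⊗[ℤ] Aᵐᵒᵖ)) : B ⊗[ℤ] Aᵐᵒᵖ) = (w B : B) ⊗ₜ op (v A : A)) :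
    ∃ w : ∀ (A : Type u) [Ring A], (Subring.center A)ˣ,
      ∀ (A : Type u) [Ring A] (B : Type u) [Ring B],
        ((z A B : Subring.center (B ⊗[ℤ] Aᵐᵒᵖ)) : B ⊗[ℤ] Aᵐᵒᵖ) =
          ((((w B : Subring.center B) : B)) ⊗ₜ[ℤ] (1 : Aᵐᵒᵖ)) *
            ((1 : B) ⊗ₜ[ℤ] (op ((((w A)⁻¹ : (Subring.center A)ˣ) : Subring.center A) : A))) := by
  refine ⟨fun A _ => ⟨w A, v A, (mul_comm _ _).trans (hvw A), hvw A⟩, fun A _ B _ => ?_⟩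
  rw [Algebra.TensorProduct.tmul_mul_tmul, mul_one, one_mul]
  exact hz A B

/-- Vanishing of `E₂^{1,1}` for the bicategory of rings and bimodules:
every cocycle `z` of central units of the rings `B ⊗[ℤ] Aᵐᵒᵖ` is a coboundary. -/
theorem cocycle_on_rings_is_coboundary
    (z : ∀ (A : Type u) [Ring A] (B : Type u) [Ring B],
      (Subring.center (B ⊗[ℤ] Aᵐᵒᵖ))ˣ)
    (hz : ∀ (A : Type u) [Ring A] (B : Type u) [Ring B] (C : Type u) [Ring C],
      cocyclePairing A B C
          ((((z B C : Subring.center (C ⊗[ℤ] Bᵐᵒᵖ)) : C ⊗[ℤ] Bᵐᵒᵖ)) ⊗ₜ[ℤ]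
            (((z A B : Subring.center (B ⊗[ℤ] Aᵐᵒᵖ)) : B ⊗[ℤ] Aᵐᵒᵖ))) =
        unitInsertion A B C
          (((z A C : Subring.center (C ⊗[ℤ] Aᵐᵒᵖ)) : C ⊗[ℤ] Aᵐᵒᵖ))) :
    ∃ w : ∀ (A : Type u) [Ring A], (Subring.center A)ˣ,
      ∀ (A : Type u) [Ring A] (B : Type u) [Ring B],
        ((z A B : Subring.center (B ⊗[ℤ] Aᵐᵒᵖ)) : B ⊗[ℤ] Aᵐᵒᵖ) =
          ((((w B : Subring.center B) : B)) ⊗ₜ[ℤ] (1 : Aᵐᵒᵖ)) *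
            ((1 : B) ⊗ₜ[ℤ] (MulOpposite.op ((((w A)⁻¹ : (Subring.center A)ˣ) : Subring.center A) : A))) := by
  have hc := down_uliftOpRid_eq_one (hz (ULift.{u} ℤ) (ULift.{u} ℤ) (ULift.{u} ℤ))
    ((z _ _).isUnit.map (Subring.center _).subtype)
  refine exists_coboundary_of_eq_tmul z
    (fun A _ => Subring.centerCongr (uliftOpRid A).toRingEquiv (z (ULift.{u} ℤ) A))
    (fun A _ => Subring.centerToMulOpposite.symm
      (Subring.centerCongr (uliftLid Aᵐᵒᵖ).toRingEquiv (z A (ULift.{u} ℤ))))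
    (fun A _ => Subtype.ext ?_) (fun A _ B _ => eq_tmul_of_cocyclePairing_eq A B (hz A _ B))
  exact (unop_mul_eq_of_cocyclePairing_eq A (hz _ A _)).trans (by simp [hc])
end

section
/- Fix a universe u containing the ring of integers (e.g. via ULift). Suppose that for every ring A in u a unit z(A) of the center of A is given, such that for all rings A, B in u the equality z(B) ⊗ 1 = 1 ⊗ op(z(A)) holds in the ring B ⊗[ℤ] Aᵐᵒᵖ. Then either z(A) = 1 for every ring A in u, or z(A) = −1 (the image of −1 ∈ ℤ in A) for every ring A in u. -/
open scoped TensorProduct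

universe u

/-!
Taking `B = ULift ℤ` in the hypothesis and collapsing `ULift ℤ ⊗[ℤ] Aᵐᵒᵖ ≅ Aᵐᵒᵖ` shows
that `z(A)` is the image in `A` of the single integer `n = z(ULift ℤ)`. Since `z(ULift ℤ)`
is a unit, `n = ±1`.
-/

theorem ULift.int_down_eq_one_or_neg_one {r : ULift ℤ} (hr : IsUnit r) :
    r.down = 1 ∨ r.down = -1 :=
  Int.isUnit_iff.mp (hr.map ULift.ringEquiv)

theorem ULift.eq_zsmul_of_tmul_eq_one_tmul {M : Type*} [AddCommGroup M] {r : ULift ℤ} {m a : M}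
    (h : r ⊗ₜ[ℤ] m = (1 : ULift ℤ) ⊗ₜ a) : a = r.down • m := by
  have := congrArg
    (TensorProduct.lid ℤ M ∘ TensorProduct.map ULift.moduleEquiv.toLinearMap LinearMap.id) h
  simpa [eq_comm] using this

/-- If a family of central units `z(A)` of all rings `A` satisfies
`z(B) ⊗ 1 = 1 ⊗ op (z(A))` in `B ⊗[ℤ] Aᵐᵒᵖ` for all rings `A`, `B`, then the family is
constantly `1` or constantly `-1`. (The automorphism group of the tensor unit of the
Drinfeld center of the bicategory of rings and bimodules is cyclic of order 2.) -/
theorem central_units_family_eq_one_or_neg_one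
    (z : ∀ (A : Type u) [Ring A], (Subring.center A)ˣ)
    (hz : ∀ (A : Type u) [Ring A] (B : Type u) [Ring B],
      ((((z B : Subring.center B) : B)) ⊗ₜ[ℤ] (1 : Aᵐᵒᵖ) : B ⊗[ℤ] Aᵐᵒᵖ) =
        (1 : B) ⊗ₜ[ℤ] (MulOpposite.op ((z A : Subring.center A) : A))) :
    (∀ (A : Type u) [Ring A], ((z A : Subring.center A) : A) = 1) ∨
    (∀ (A : Type u) [Ring A], ((z A : Subring.center A) : A) = -1) := by
  set r : ULift ℤ := ((z (ULift ℤ) : Subring.center (ULift ℤ)) : ULift ℤ)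
  have hr : IsUnit r := (z (ULift ℤ)).isUnit.map (Subring.center (ULift ℤ)).subtype
  have hcast : ∀ (A : Type u) [Ring A], ((z A : Subring.center A) : A) = r.down := by
    intro A _
    apply MulOpposite.op_injective
    rw [MulOpposite.op_intCast, ← zsmul_one]
    exact ULift.eq_zsmul_of_tmul_eq_one_tmul (hz A (ULift ℤ))
  rcases ULift.int_down_eq_one_or_neg_one hr with h | h
  · exact .inl fun A _ => by rw [hcast A, h, Int.cast_one]
  · exact .inr fun A _ => by rw [hcast A, h, Int.cast_neg, Int.cast_one]
end

section
/- Let G be a group, A a commutative group written multiplicatively, and ω : G → G → G → A a function satisfying the 3-cocycle identity (for the trivial G-action on A): ω(h,k,l) · ω(g, h·k, l) · ω(g,h,k) = ω(g·h, k, l) · ω(g, h, k·l) for all g, h, k, l ∈ G. Let z be an element of the center of G. Then the function γ : G → G → A defined by γ(g,h) = ω(g,h,z) · ω(g,z,h)⁻¹ · ω(z,g,h) satisfies the 2-cocycle identity (for the trivial action): γ(h,k) · γ(g, h·k) = γ(g·h, k) · γ(g,h) for all g, h, k ∈ G. -/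
/-! Writing `δ` for the (trivial-action) coboundary, the slant product `γ = i_z ω` satisfies
`δγ(g,h,k) = δω(g,h,k,z) · δω(g,h,z,k)⁻¹ · δω(g,z,h,k) · δω(z,g,h,k)⁻¹`
as soon as `z` commutes with `g`, `h` and `k`: the contraction with a central element commutes
with the coboundary up to sign. Hence `δω = 1` forces `δγ = 1`. -/

section

variable {G A : Type*} [Group G] [CommGroup A]

def IsThreeCocycle (ω : G → G → G → A) : Prop :=
  ∀ g h k l : G, ω h k l * ω g (h * k) l * ω g h k = ω (g * h) k l * ω g h (k * l)

def IsTwoCocycle (γ : G → G → A) : Prop :=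
  ∀ g h k : G, γ h k * γ g (h * k) = γ (g * h) k * γ g h

def threeCoboundary (ω : G → G → G → A) (g h k l : G) : A :=
  ω h k l * ω g (h * k) l * ω g h k / (ω (g * h) k l * ω g h (k * l))

def twoCoboundary (γ : G → G → A) (g h k : G) : A :=
  γ h k * γ g (h * k) / (γ (g * h) k * γ g h)

def slant (ω : G → G → G → A) (z g h : G) : A :=
  ω g h z * (ω g z h)⁻¹ * ω z g h

theorem IsThreeCocycle.threeCoboundary_eq_one {ω : G → G → G → A} (hω : IsThreeCocycle ω)
    (g h k l : G) : threeCoboundary ω g h k l = 1 :=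
  div_eq_one.mpr (hω g h k l)

theorem twoCoboundary_slant (ω : G → G → G → A) {z : G} (hz : z ∈ Subgroup.center G)
    (g h k : G) :
    twoCoboundary (slant ω z) g h k =
      threeCoboundary ω g h k z / threeCoboundary ω g h z k * threeCoboundary ω g z h k /
        threeCoboundary ω z g h k := by
  have hcomm : ∀ x : G, x * z = z * x := Subgroup.mem_center_iff.mp hz
  simp only [twoCoboundary, threeCoboundary, slant, hcomm]
  apply Additive.ofMul.injective
  simp only [ofMul_mul, ofMul_div, ofMul_inv]
  abel

theorem IsThreeCocycle.isTwoCocycle_slant {ω : G → G → G → A} (hω : IsThreeCocycle ω)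
    {z : G} (hz : z ∈ Subgroup.center G) : IsTwoCocycle (slant ω z) := fun g h k =>
  div_eq_one.mp <| (twoCoboundary_slant ω hz g h k).trans <| by
    simp only [hω.threeCoboundary_eq_one, div_one, mul_one]

end

/-- If `ω` is a 3-cocycle on a group `G` with values in a commutative group
`A` (trivial action) and `z` is central in `G`, then
`γ(g,h) = ω(g,h,z) · ω(g,z,h)⁻¹ · ω(z,g,h)` is a 2-cocycle. -/
theorem two_cocycle_from_three_cocycle_and_central_element
    {G A : Type*} [Group G] [CommGroup A] (ω : G → G → G → A)
    (hω : ∀ g h k l : G,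
      ω h k l * ω g (h * k) l * ω g h k = ω (g * h) k l * ω g h (k * l))
    (z : G) (hz : z ∈ Subgroup.center G) :
    ∀ g h k : G,
      (ω h k z * (ω h z k)⁻¹ * ω z h k) *
        (ω g (h * k) z * (ω g z (h * k))⁻¹ * ω z g (h * k)) =
      (ω (g * h) k z * (ω (g * h) z k)⁻¹ * ω z (g * h) k) *
        (ω g h z * (ω g z h)⁻¹ * ω z g h) :=
  IsThreeCocycle.isTwoCocycle_slant hω hz
end

section
/- Let n ≥ 2, let K be a field, and let ζ ∈ K be a primitive n-th root of unity. Let G = (ZMod n)³, define ω : G → G → G → Kˣ by ω(x,y,z) = ζ^(x₁·y₂·z₃) (exponents via natural-number representatives of the ZMod n coordinates), let e₁ = (1,0,0) ∈ G, and define γ : G → G → Kˣ by γ(x,y) = ω(x,y,e₁) · ω(x,e₁,y)⁻¹ · ω(e₁,x,y). Then γ is not a 2-coboundary: there is no function φ : G → Kˣ such that γ(x,y) = φ(x) · φ(y) · φ(x+y)⁻¹ for all x, y ∈ G. -/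
/-!
A coboundary `(x, y) ↦ φ x * φ y * (φ (x + y))⁻¹` with values in a commutative group is
symmetric in `x` and `y`. For the cocycle `ω(x,y,z) = ζ ^ (x₁ y₂ z₃)`, the terms of `γ` not
involving `ω(e₁, x, y)` vanish, so `γ(x, y) = ζ ^ (x₂ y₃)`, which takes the value `ζ ≠ 1` at
`(e₂, e₃)` but `1` at `(e₃, e₂)`.
-/

theorem not_exists_coboundary_of_ne_swap {G A : Type*} [AddCommMagma G] [CommGroup A]
    {γ : G → G → A} {a b : G} (h : γ a b ≠ γ b a) :
    ¬ ∃ φ : G → A, ∀ x y, γ x y = φ x * φ y * (φ (x + y))⁻¹ := by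
  rintro ⟨φ, hφ⟩
  exact h (by rw [hφ, hφ, add_comm, mul_comm (φ a)])

section TripleProduct

variable {n : ℕ} {M : Type*} [CommGroup M]

def tripleProductCocycle (ζ : M) (x y z : ZMod n × ZMod n × ZMod n) : M :=
  ζ ^ (x.1.val * y.2.1.val * z.2.2.val)

def obstructionCocycle {G : Type*} (ω : G → G → G → M) (e : G) (x y : G) : M :=
  ω x y e * (ω x e y)⁻¹ * ω e x y

theorem obstructionCocycle_tripleProductCocycle [Fact (1 < n)] (ζ : M)
    (x y : ZMod n × ZMod n × ZMod n) :
    obstructionCocycle (tripleProductCocycle ζ) (1, 0, 0) x y = ζ ^ (x.2.1.val * y.2.2.val) := by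
  simp [obstructionCocycle, tripleProductCocycle, ZMod.val_one]

end TripleProduct

/-- For `n ≥ 2`, a field `K` with a primitive `n`-th root of unity `ζ`,
the deformation 3-cocycle `ω(x,y,z) = ζ ^ (x₁ · y₂ · z₃)` on `G = (ZMod n)³` and the
central element `e₁ = (1,0,0)`, the 2-cocycle
`γ(x,y) = ω(x,y,e₁) · ω(x,e₁,y)⁻¹ · ω(e₁,x,y)` is not a 2-coboundary. -/
theorem obstruction_two_cocycle_is_not_coboundary
    (n : ℕ) (hn : 2 ≤ n) (K : Type*) [Field K] (ζ : Kˣ)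
    (hζ : IsPrimitiveRoot (ζ : K) n)
    (ω : (ZMod n × ZMod n × ZMod n) → (ZMod n × ZMod n × ZMod n) →
      (ZMod n × ZMod n × ZMod n) → Kˣ)
    (hω : ∀ x y z, ω x y z = ζ ^ (x.1.val * y.2.1.val * z.2.2.val))
    (e₁ : ZMod n × ZMod n × ZMod n) (he₁ : e₁ = ((1 : ZMod n), (0 : ZMod n), (0 : ZMod n)))
    (γ : (ZMod n × ZMod n × ZMod n) → (ZMod n × ZMod n × ZMod n) → Kˣ)
    (hγ : ∀ x y, γ x y = ω x y e₁ * (ω x e₁ y)⁻¹ * ω e₁ x y) :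
    ¬ ∃ φ : (ZMod n × ZMod n × ZMod n) → Kˣ,
      ∀ x y, γ x y = φ x * φ y * (φ (x + y))⁻¹ := by
  have : Fact (1 < n) := ⟨hn⟩
  obtain rfl : ω = tripleProductCocycle ζ := funext₃ hω
  obtain rfl : γ = obstructionCocycle (tripleProductCocycle ζ) e₁ := funext₂ hγ
  subst he₁
  refine not_exists_coboundary_of_ne_swap (a := (0, 1, 0)) (b := (0, 0, 1)) ?_
  simp only [obstructionCocycle_tripleProductCocycle, ZMod.val_one, ZMod.val_zero]
  simpa [← Units.val_eq_one] using hζ.ne_one hn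
end

section
/- Let C be a monoidal category. Consider the group Z of natural automorphisms f of the identity functor of C satisfying f_{M⊗N} = f_M ⊗ f_N for all objects M, N (under composition), and its subgroup B of those f for which there exists an automorphism u of the tensor unit 𝟙_C with f_M = λ_M⁻¹ ≫ (u ▷ M) ≫ λ_M ≫ ρ_M⁻¹ ≫ (M ◁ u⁻¹) ≫ ρ_M for all M. Then the quotient group Z/B is isomorphic to the group of isomorphism classes of objects (P, p) of the Drinfeld center Center C whose underlying object P is isomorphic to 𝟙_C in C, with group operation induced by the tensor product of Center C. Explicitly, the isomorphism sends the class of f ∈ Z to the class of the central object (𝟙_C, p_f) whose half-braiding at M is obtained from f_M by composing with the unitor identifications 𝟙_C ⊗ M ≅ M ≅ M ⊗ 𝟙_C. -/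
/-!
A half-braiding on `𝟙_ C` is the same thing as a tensor-compatible automorphism `f` of the
identity functor, via `p_f(M) = λ_M ≫ f_M ≫ ρ_M⁻¹`, and a central object whose underlying object
is isomorphic to `𝟙_ C` can be transported to one with underlying object `𝟙_ C`. An isomorphism
`(𝟙_ C, p_f) ≅ (𝟙_ C, p_g)` is an automorphism `v` of `𝟙_ C` with `L_v ≫ g = R_v ≫ f`, where
`L_v`, `R_v` are the actions of `v` through the left and right unitors; this says
`f⁻¹ g = R_v L_v⁻¹`, the image of `v⁻¹` under `u ↦ L_u R_u⁻¹`. Since automorphisms of the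
identity functor commute, that map is a homomorphism, and its range is `B`.
-/

open CategoryTheory MonoidalCategory

universe v u

/-- The object of the Drinfeld center with underlying object the tensor unit and a given
half-braiding. -/
def Center.mkUnit (C : Type u) [Category.{v} C] [MonoidalCategory C]
    (b : HalfBraiding (𝟙_ C)) : Center C := ⟨𝟙_ C, b⟩

namespace CategoryTheory

variable {C : Type u} [Category.{v} C] [MonoidalCategory C]

lemma HalfBraiding.ext {P : C} {b b' : HalfBraiding P} (h : ∀ U, (b.β U).hom = (b'.β U).hom) :
    b = b' := by
  cases b
  cases b'
  congr
  funext U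
  exact Iso.ext (h U)

lemma Center.nonempty_iso_iff {X Y : Center C} :
    Nonempty (X ≅ Y) ↔
      ∃ e : X.1 ≅ Y.1, ∀ U, e.hom ▷ U ≫ (Y.2.β U).hom = (X.2.β U).hom ≫ U ◁ e.hom :=
  ⟨fun ⟨e⟩ => ⟨(Center.forget C).mapIso e, e.hom.comm⟩,
    fun ⟨e, h⟩ => ⟨Center.isoMk ⟨e.hom, h⟩⟩⟩

def HalfBraiding.transport (X : Center C) {P : C} (e : X.1 ≅ P) : HalfBraiding P where
  β U := whiskerRightIso e.symm U ≪≫ X.2.β U ≪≫ whiskerLeftIso U e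
  monoidal U U' := by simp
  naturality f := by
    simp only [Iso.trans_hom, whiskerRightIso_hom, whiskerLeftIso_hom, Iso.symm_hom,
      Category.assoc]
    rw [whisker_exchange_assoc, HalfBraiding.naturality_assoc, ← whisker_exchange]

lemma Center.nonempty_iso_transport (X : Center C) {P : C} (e : X.1 ≅ P) :
    Nonempty (X ≅ ⟨P, HalfBraiding.transport X e⟩) :=
  Center.nonempty_iso_iff.2 ⟨e, fun U => by simp [HalfBraiding.transport]⟩

variable (C)

instance : CommGroup (Aut (𝟭 C)) where
  mul_comm f g := Iso.ext (NatTrans.id_comm g.hom f.hom)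

def leftUnitAction : Aut (𝟙_ C) →* Aut (𝟭 C) :=
  (Aut.autMulEquivOfIso (leftUnitorNatIso C)).toMonoidHom.comp
    ((curriedTensor C).mapAut (𝟙_ C))

def rightUnitAction : Aut (𝟙_ C) →* Aut (𝟭 C) :=
  (Aut.autMulEquivOfIso (rightUnitorNatIso C)).toMonoidHom.comp
    ((curriedTensor C).flip.mapAut (𝟙_ C))

def unitConjugation : Aut (𝟙_ C) →* Aut (𝟭 C) :=
  (rightUnitAction C)⁻¹ * leftUnitAction C

lemma unitConjugation_hom_app (u : Aut (𝟙_ C)) (M : C) :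
    (unitConjugation C u).hom.app M =
      (λ_ M).inv ≫ (u.hom ▷ M) ≫ (λ_ M).hom ≫ (ρ_ M).inv ≫ (M ◁ u.inv) ≫ (ρ_ M).hom := by
  -- in `Aut X`, `(a * b).hom = b.hom ≫ a.hom`
  change ((λ_ M).inv ≫ u.hom ▷ M ≫ (λ_ M).hom) ≫ ((ρ_ M).inv ≫ M ◁ u.inv ≫ (ρ_ M).hom) = _
  simp only [Category.assoc]

lemma mem_range_unitConjugation {f : Aut (𝟭 C)} :
    f ∈ (unitConjugation C).range ↔ ∃ u : Aut (𝟙_ C), ∀ M : C, f.hom.app M =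
      (λ_ M).inv ≫ (u.hom ▷ M) ≫ (λ_ M).hom ≫ (ρ_ M).inv ≫ (M ◁ u.inv) ≫ (ρ_ M).hom := by
  refine exists_congr fun u => ⟨fun hu M => ?_, fun hu =>
    Aut.ext <| NatTrans.ext <| funext fun M => (unitConjugation_hom_app C u M).trans (hu M).symm⟩
  rw [← hu, unitConjugation_hom_app]

lemma unitConjugation_inv_eq_iff {f g : Aut (𝟭 C)} (v : Aut (𝟙_ C)) :
    unitConjugation C v⁻¹ = f⁻¹ * g ↔ g * leftUnitAction C v = f * rightUnitAction C v := by
  rw [unitConjugation, MonoidHom.mul_apply, MonoidHom.inv_apply, map_inv, map_inv, inv_inv,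
    mul_inv_eq_iff_eq_mul, mul_assoc, eq_inv_mul_iff_mul_eq, eq_comm]

def tensorCompatibleAut : Subgroup (Aut (𝟭 C)) where
  carrier := {f | ∀ M N : C, f.hom.app (M ⊗ N) = f.hom.app M ⊗ₘ f.hom.app N}
  one_mem' M N := (id_tensorHom_id M N).symm
  mul_mem' {f g} hf hg M N := by
    change g.hom.app _ ≫ f.hom.app _ =
      (g.hom.app M ≫ f.hom.app M) ⊗ₘ (g.hom.app N ≫ f.hom.app N)
    rw [hf, hg, tensorHom_comp_tensorHom]
    rfl
  inv_mem' {f} hf M N := (f.app (M ⊗ N)).inv_ext <| by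
    change f.hom.app _ ≫ (f.inv.app M ⊗ₘ f.inv.app N) = _
    rw [hf, tensorHom_comp_tensorHom]
    simp [Iso.hom_inv_id_app (f : 𝟭 C ≅ 𝟭 C)]

variable {C}

lemma mem_tensorCompatibleAut {f : Aut (𝟭 C)} :
    f ∈ tensorCompatibleAut C ↔ ∀ M N : C, f.hom.app (M ⊗ N) = f.hom.app M ⊗ₘ f.hom.app N :=
  Iff.rfl

def HalfBraiding.ofTensorCompatibleAut (f : Aut (𝟭 C)) (hf : f ∈ tensorCompatibleAut C) :
    HalfBraiding (𝟙_ C) where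
  β M :=
    { hom := (λ_ M).hom ≫ f.hom.app M ≫ (ρ_ M).inv
      inv := (ρ_ M).hom ≫ f.inv.app M ≫ (λ_ M).inv
      hom_inv_id := by simp [Iso.hom_inv_id_app_assoc (f : 𝟭 C ≅ 𝟭 C)]
      inv_hom_id := by simp [Iso.inv_hom_id_app_assoc (f : 𝟭 C ≅ 𝟭 C)] }
  monoidal M N := by
    dsimp only
    rw [hf M N, MonoidalCategory.tensorHom_def]
    monoidal
  naturality {M N} h := by
    dsimp only
    rw [leftUnitor_naturality_assoc, Category.assoc, Category.assoc,
      ← rightUnitor_inv_naturality h]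
    exact congrArg ((λ_ M).hom ≫ ·) (f.hom.naturality_assoc h (ρ_ N).inv)

def tensorCompatibleAutOfHalfBraiding (b : HalfBraiding (𝟙_ C)) : tensorCompatibleAut C where
  val := NatIso.ofComponents (fun M => (λ_ M).symm ≪≫ b.β M ≪≫ ρ_ M) fun {M N} h => by
    simp only [Functor.id_obj, Functor.id_map, Iso.trans_hom, Iso.symm_hom]
    rw [leftUnitor_inv_naturality_assoc, HalfBraiding.naturality_assoc, rightUnitor_naturality]
    simp only [Category.assoc]
  property M N := by
    simp only [NatIso.ofComponents_hom_app, Iso.trans_hom, Iso.symm_hom, HalfBraiding.monoidal,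
      MonoidalCategory.tensorHom_def]
    monoidal

def unitHalfBraidingEquiv : tensorCompatibleAut C ≃ HalfBraiding (𝟙_ C) where
  toFun f := HalfBraiding.ofTensorCompatibleAut f.1 f.2
  invFun := tensorCompatibleAutOfHalfBraiding
  left_inv f := by
    ext M
    simp [HalfBraiding.ofTensorCompatibleAut, tensorCompatibleAutOfHalfBraiding]
  right_inv b := HalfBraiding.ext fun M => by
    simp [HalfBraiding.ofTensorCompatibleAut, tensorCompatibleAutOfHalfBraiding]

lemma unitHalfBraidingEquiv_β_hom (f : tensorCompatibleAut C) (M : C) :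
    ((unitHalfBraidingEquiv f).β M).hom = (λ_ M).hom ≫ f.1.hom.app M ≫ (ρ_ M).inv :=
  rfl

lemma unitHalfBraidingEquiv_comm_iff (f g : tensorCompatibleAut C) (v : 𝟙_ C ≅ 𝟙_ C) :
    (∀ M, v.hom ▷ M ≫ ((unitHalfBraidingEquiv g).β M).hom =
        ((unitHalfBraidingEquiv f).β M).hom ≫ M ◁ v.hom) ↔
      g.1 * leftUnitAction C v = f.1 * rightUnitAction C v := by
  rw [Aut.ext_iff, NatTrans.ext_iff, funext_iff]
  refine forall_congr' fun M => ?_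
  change _ ↔ ((λ_ M).inv ≫ v.hom ▷ M ≫ (λ_ M).hom) ≫ g.1.hom.app M =
    ((ρ_ M).inv ≫ M ◁ v.hom ≫ (ρ_ M).hom) ≫ f.1.hom.app M
  have hf : ((ρ_ M).inv ≫ M ◁ v.hom ≫ (ρ_ M).hom) ≫ f.1.hom.app M =
      f.1.hom.app M ≫ (ρ_ M).inv ≫ M ◁ v.hom ≫ (ρ_ M).hom :=
    f.1.hom.naturality _
  rw [unitHalfBraidingEquiv_β_hom, unitHalfBraidingEquiv_β_hom, hf, ← cancel_mono (ρ_ M).hom]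
  simp only [Category.assoc, Iso.inv_comp_eq, Iso.inv_hom_id, Category.comp_id]

lemma nonempty_iso_mkUnit_unitHalfBraidingEquiv_mul (f g : tensorCompatibleAut C) :
    Nonempty (Center.mkUnit C (unitHalfBraidingEquiv (f * g)) ≅
      Center.mkUnit C (unitHalfBraidingEquiv f) ⊗ Center.mkUnit C (unitHalfBraidingEquiv g)) :=
  Center.nonempty_iso_iff.2 ⟨(λ_ (𝟙_ C)).symm, fun U => by
    simp only [Center.tensor_β, Iso.trans_hom, Iso.symm_hom, whiskerRightIso_hom,
      whiskerLeftIso_hom]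
    change _ = ((λ_ U).hom ≫ (g.1.hom.app U ≫ f.1.hom.app U) ≫ (ρ_ U).inv) ≫ _
    dsimp only [Center.mkUnit]
    rw [unitHalfBraidingEquiv_β_hom, unitHalfBraidingEquiv_β_hom]
    monoidal⟩

lemma inv_mul_mem_iff_nonempty_iso_mkUnit (f g : tensorCompatibleAut C) :
    f⁻¹ * g ∈ (unitConjugation C).range.subgroupOf (tensorCompatibleAut C) ↔
      Nonempty (Center.mkUnit C (unitHalfBraidingEquiv f) ≅
        Center.mkUnit C (unitHalfBraidingEquiv g)) := by
  rw [Subgroup.mem_subgroupOf, MonoidHom.mem_range, Center.nonempty_iso_iff,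
    (Equiv.inv (Aut (𝟙_ C))).exists_congr_left]
  refine exists_congr fun v => ?_
  rw [Equiv.inv_symm, Equiv.inv_apply, Subgroup.coe_mul, Subgroup.coe_inv,
    unitConjugation_inv_eq_iff]
  exact (unitHalfBraidingEquiv_comm_iff f g v).symm

lemma exists_nonempty_iso_mkUnit_unitHalfBraidingEquiv (X : Center C) (e : X.1 ≅ 𝟙_ C) :
    ∃ f : tensorCompatibleAut C, Nonempty (Center.mkUnit C (unitHalfBraidingEquiv f) ≅ X) := by
  obtain ⟨f, hf⟩ := unitHalfBraidingEquiv.surjective (HalfBraiding.transport X e)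
  exact ⟨f, hf ▸ (Center.nonempty_iso_transport X e).map Iso.symm⟩

end CategoryTheory

/-- For a monoidal category `C`, let `Z` be the group of natural
automorphisms `f` of the identity functor with `f_{M ⊗ N} = f_M ⊗ f_N`, and `B ≤ Z` the
subgroup of those `f` of the form
`f_M = λ_M⁻¹ ≫ (u ▷ M) ≫ λ_M ≫ ρ_M⁻¹ ≫ (M ◁ u⁻¹) ≫ ρ_M` for an automorphism `u` of
`𝟙_ C`. Then `f ↦ (𝟙_ C, p_f)`, where the half-braiding `p_f` at `M` is `f_M` composed
with the unitor identifications, induces a group isomorphism from `Z/B` onto the group of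
isomorphism classes of objects of the Drinfeld center `Center C` whose underlying object
is isomorphic to `𝟙_ C`, with the operation induced by the tensor product of `Center C`:
it identifies iso-classes exactly according to the cosets of `B`, hits every iso-class
with underlying object isomorphic to `𝟙_ C`, and is multiplicative up to isomorphism. -/
theorem quotient_iso_kernel_of_characteristic_homomorphism
    (C : Type u) [Category.{v} C] [MonoidalCategory C] :
    ∃ Zs : Subgroup (Aut (𝟭 C)),
      (∀ f : Aut (𝟭 C), f ∈ Zs ↔
        ∀ M N : C, f.hom.app (M ⊗ N) = f.hom.app M ⊗ₘ f.hom.app N) ∧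
      ∃ Bs : Subgroup Zs,
        (∀ f : Zs, f ∈ Bs ↔ ∃ u : Aut (𝟙_ C), ∀ M : C,
          (f : Aut (𝟭 C)).hom.app M =
            (λ_ M).inv ≫ (u.hom ▷ M) ≫ (λ_ M).hom ≫
              (ρ_ M).inv ≫ (M ◁ u.inv) ≫ (ρ_ M).hom) ∧
        ∃ b : Zs → HalfBraiding (𝟙_ C),
          (∀ (f : Zs) (M : C), ((b f).β M).hom =
            (λ_ M).hom ≫ (f : Aut (𝟭 C)).hom.app M ≫ (ρ_ M).inv) ∧
          (∀ f g : Zs, f⁻¹ * g ∈ Bs ↔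
            Nonempty (Center.mkUnit C (b f) ≅ Center.mkUnit C (b g))) ∧
          (∀ X : Center C, Nonempty (X.1 ≅ 𝟙_ C) →
            ∃ f : Zs, Nonempty (Center.mkUnit C (b f) ≅ X)) ∧
          (∀ f g : Zs, Nonempty (Center.mkUnit C (b (f * g)) ≅
            Center.mkUnit C (b f) ⊗ Center.mkUnit C (b g))) := by
  refine ⟨tensorCompatibleAut C, fun _ => mem_tensorCompatibleAut,
    (unitConjugation C).range.subgroupOf _,
    fun _ => by rw [Subgroup.mem_subgroupOf, mem_range_unitConjugation],
    unitHalfBraidingEquiv, unitHalfBraidingEquiv_β_hom, inv_mul_mem_iff_nonempty_iso_mkUnit,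
    fun X ⟨e⟩ => exists_nonempty_iso_mkUnit_unitHalfBraidingEquiv X e,
    nonempty_iso_mkUnit_unitHalfBraidingEquiv_mul⟩
end
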